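/- arXiv:1903.08162 — 4 statements merged into one kernel-verified Lean document; each statement's English description precedes it below -/
import Mathlib

section
/- Suppose q₁ = 2N for a natural number N, and the coefficients c₀,…,c_N satisfy the recurrence n(n−1+p₀)c_n + (p₁(n−1)+q₀)c_{n−1} + (−2(n−2)+2N)c_{n−2} = 0 for 2 ≤ n ≤ N, the initial condition p₀ c₁ + q₀ c₀ = 0, and the terminal conditions (N+1)(N+p₀)·0 + (p₁ N + q₀)c_N + (−2(N−1)+2N)c_{N−1} = 0 and (−2N+2N)c_N = 0 trivially; then the polynomial Φ(z) = Σ_{n=0}^N c_n (sz)^n solves the biconfluent Heun equation z Φ'' + (p₀ + p₁ s z − 2 s² z²) Φ' + (q₀ s + 2N s² z) Φ = 0. -/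
/-!
Write `Φ(z) = Ψ(sz)` with `Ψ = Σ_{n ≤ N} c_n wⁿ`. Rescaling `z ↦ sz` turns the equation for `Φ`
into `s` times the biconfluent Heun equation `w Ψ'' + (p₀ + p₁ w − 2w²) Ψ' + (q₀ + 2N w) Ψ = 0`
at `w = sz`, so it suffices that this polynomial identity holds. The coefficient of `wⁿ⁻¹` of its
left side is the three-term expression of the recurrence. For `n ≤ N` it vanishes by hypothesis,
for `n = N + 1` by the terminal condition, and for `n = N + 2` because `q₁ − 2N = 0` kills the
only surviving term `c_N`.
-/

open Polynomial Finset

section Algebra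

variable {R : Type*} [CommRing R]

noncomputable def biconfluentHeunOp (p₀ p₁ q₀ q₁ : R) (P : R[X]) : R[X] :=
  X * derivative (derivative P) + (C p₀ + C p₁ * X - 2 * X ^ 2) * derivative P
    + (C q₀ + C q₁ * X) * P

theorem coeff_biconfluentHeunOp_zero (p₀ p₁ q₀ q₁ : R) (P : R[X]) :
    (biconfluentHeunOp p₀ p₁ q₀ q₁ P).coeff 0 = p₀ * P.coeff 1 + q₀ * P.coeff 0 := by
  simp [biconfluentHeunOp, mul_coeff_zero, coeff_derivative]

theorem coeff_biconfluentHeunOp_succ (p₀ p₁ q₀ q₁ : R) (P : R[X]) (n : ℕ) :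
    (biconfluentHeunOp p₀ p₁ q₀ q₁ P).coeff (n + 1) =
      (n + 2) * (n + 1 + p₀) * P.coeff (n + 2) + (p₁ * (n + 1) + q₀) * P.coeff (n + 1)
        + (q₁ - 2 * n) * P.coeff n := by
  rcases n with _ | n <;>
  · simp [biconfluentHeunOp, add_mul, sub_mul, mul_assoc, coeff_X_pow_mul', coeff_derivative,
      ← C_ofNat]
    ring

theorem coeff_sum_range_C_mul_X_pow (c : ℕ → R) (N k : ℕ) :
    (∑ n ∈ range (N + 1), C (c n) * X ^ n).coeff k = if k ≤ N then c k else 0 := by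
  simp

theorem biconfluentHeunOp_sum_range_eq_zero (p₀ p₁ q₀ : R) (N : ℕ) (hN : 1 ≤ N) (c : ℕ → R)
    (hrec : ∀ n : ℕ, 2 ≤ n → n ≤ N →
      (n : R) * ((n : R) - 1 + p₀) * c n + (p₁ * ((n : R) - 1) + q₀) * c (n - 1)
        + (-2 * ((n : R) - 2) + 2 * (N : R)) * c (n - 2) = 0)
    (hinit : p₀ * c 1 + q₀ * c 0 = 0)
    (hterm : (p₁ * (N : R) + q₀) * c N + (-2 * ((N : R) - 1) + 2 * (N : R)) * c (N - 1) = 0) :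
    biconfluentHeunOp p₀ p₁ q₀ (2 * N) (∑ n ∈ range (N + 1), C (c n) * X ^ n) = 0 := by
  ext (_ | m)
  · rw [coeff_biconfluentHeunOp_zero, coeff_sum_range_C_mul_X_pow, coeff_sum_range_C_mul_X_pow,
      if_pos hN, if_pos N.zero_le, coeff_zero]
    exact hinit
  rw [coeff_biconfluentHeunOp_succ, coeff_zero]
  simp only [coeff_sum_range_C_mul_X_pow]
  rcases lt_trichotomy (m + 1) N with hlt | rfl | hgt
  · have h := hrec (m + 2) (by omega) hlt
    simp only [Nat.add_sub_cancel, show m + 2 - 1 = m + 1 by omega] at h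
    rw [if_pos (by omega : m + 2 ≤ N), if_pos hlt.le, if_pos (by omega : m ≤ N)]
    push_cast at h
    linear_combination h
  · simp only [Nat.add_sub_cancel] at hterm
    rw [if_neg (by omega : ¬m + 2 ≤ m + 1), if_pos le_rfl, if_pos (by omega : m ≤ m + 1)]
    push_cast at hterm ⊢
    linear_combination hterm
  · rw [if_neg (by omega : ¬m + 2 ≤ N), if_neg (by omega : ¬m + 1 ≤ N)]
    split_ifs with hm
    · obtain rfl : m = N := by omega
      ring
    · ring

end Algebra

section Analysis

variable {𝕜 : Type*} [NontriviallyNormedField 𝕜]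

theorem deriv_eval_mul_left (P : 𝕜[X]) (s : 𝕜) :
    deriv (fun z => P.eval (s * z)) = fun z => s * P.derivative.eval (s * z) := by
  funext z
  rw [deriv_comp_mul_left s (fun w => P.eval w) z, Polynomial.deriv, smul_eq_mul]

theorem deriv_deriv_eval_mul_left (P : 𝕜[X]) (s : 𝕜) :
    deriv (deriv fun z => P.eval (s * z)) =
      fun z => s ^ 2 * P.derivative.derivative.eval (s * z) := by
  funext z
  rw [deriv_eval_mul_left, deriv_const_mul_field', deriv_eval_mul_left]
  ring

end Analysis

theorem bhe_polynomial_solution_general (p₀ p₁ q₀ : ℂ) (s : ℂ) (N : ℕ) (hN : 1 ≤ N)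
    (c : ℕ → ℂ)
    (hrec : ∀ n : ℕ, 2 ≤ n → n ≤ N →
      (n : ℂ) * ((n : ℂ) - 1 + p₀) * c n + (p₁ * ((n : ℂ) - 1) + q₀) * c (n - 1)
        + (-2 * ((n : ℂ) - 2) + 2 * (N : ℂ)) * c (n - 2) = 0)
    (hinit : p₀ * c 1 + q₀ * c 0 = 0)
    (hterm : (p₁ * (N : ℂ) + q₀) * c N + (-2 * ((N : ℂ) - 1) + 2 * (N : ℂ)) * c (N - 1) = 0)
    (Φ : ℂ → ℂ) (hΦ : Φ = fun z => ∑ n ∈ Finset.range (N + 1), c n * (s * z) ^ n) :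
    ∀ z : ℂ, z * deriv (deriv Φ) z + (p₀ + p₁ * s * z - 2 * s ^ 2 * z ^ 2) * deriv Φ z
      + (q₀ * s + 2 * (N : ℂ) * s ^ 2 * z) * Φ z = 0 := by
  set Ψ : ℂ[X] := ∑ n ∈ range (N + 1), C (c n) * X ^ n
  have hΦΨ : Φ = fun z => Ψ.eval (s * z) := by
    simp [hΦ, Ψ, eval_finsetSum]
  have hΨ : biconfluentHeunOp p₀ p₁ q₀ (2 * N) Ψ = 0 :=
    biconfluentHeunOp_sum_range_eq_zero p₀ p₁ q₀ N hN c hrec hinit hterm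
  intro z
  rw [hΦΨ, deriv_deriv_eval_mul_left, deriv_eval_mul_left]
  calc _ = s * (biconfluentHeunOp p₀ p₁ q₀ (2 * N) Ψ).eval (s * z) := by
          simp only [biconfluentHeunOp, eval_add, eval_sub, eval_mul, eval_C, eval_X, eval_pow,
            eval_ofNat]
          ring
    _ = 0 := by rw [hΨ, eval_zero, mul_zero]

/-- when `q₁ = 2N` and the coefficients satisfy the terminated recurrence,
the polynomial `Φ(z) = Σ_{n=0}^N c_n (sz)^n` solves the biconfluent Heun equation. -/
theorem bhe_polynomial_solution (p₀ p₁ q₀ : ℂ) (s : ℂ) (hs : s ≠ 0) (N : ℕ) (hN : 1 ≤ N)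
    (c : ℕ → ℂ)
    (hrec : ∀ n : ℕ, 2 ≤ n → n ≤ N →
      (n : ℂ) * ((n : ℂ) - 1 + p₀) * c n + (p₁ * ((n : ℂ) - 1) + q₀) * c (n - 1)
        + (-2 * ((n : ℂ) - 2) + 2 * (N : ℂ)) * c (n - 2) = 0)
    (hinit : p₀ * c 1 + q₀ * c 0 = 0)
    (hterm : (p₁ * (N : ℂ) + q₀) * c N + (-2 * ((N : ℂ) - 1) + 2 * (N : ℂ)) * c (N - 1) = 0)
    (Φ : ℂ → ℂ) (hΦ : Φ = fun z => ∑ n ∈ Finset.range (N + 1), c n * (s * z) ^ n) :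
    ∀ z : ℂ, z * deriv (deriv Φ) z + (p₀ + p₁ * s * z - 2 * s ^ 2 * z ^ 2) * deriv Φ z
      + (q₀ * s + 2 * (N : ℂ) * s ^ 2 * z) * Φ z = 0 :=
  bhe_polynomial_solution_general p₀ p₁ q₀ s N hN c hrec hinit hterm Φ hΦ
end

section
/- For N = 1 (q₁ = 2): the biconfluent Heun equation z Φ'' + (p₀ + p₁ s z − 2 s² z²) Φ' + (q₀ s + 2 s² z) Φ = 0 admits a polynomial solution of degree 1 of the form Φ(z) = c₀ + c₁ s z with c₀ ≠ 0 if and only if q₀² + p₁ q₀ − 2 p₀ = 0 (assuming p₀ ≠ 0). -/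
/-- for `N = 1` (`q₁ = 2`) the biconfluent Heun equation admits a degree-1
polynomial solution `Φ(z) = c₀ + c₁ s z` with `c₀ ≠ 0` iff `q₀² + p₁ q₀ − 2 p₀ = 0`. -/
theorem bhe_degree_one_polynomial (p₀ p₁ q₀ s : ℂ) (hp₀ : p₀ ≠ 0) (hs : s ≠ 0) :
    (∃ c₀ c₁ : ℂ, c₀ ≠ 0 ∧ c₁ ≠ 0 ∧
      ∀ z : ℂ,
        z * deriv (deriv (fun w => c₀ + c₁ * (s * w))) z
          + (p₀ + p₁ * s * z - 2 * s ^ 2 * z ^ 2) * deriv (fun w => c₀ + c₁ * (s * w)) z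
          + (q₀ * s + 2 * s ^ 2 * z) * (c₀ + c₁ * (s * z)) = 0)
    ↔ q₀ ^ 2 + p₁ * q₀ - 2 * p₀ = 0 := by
  have hderiv : ∀ c₀ c₁ : ℂ, deriv (fun w : ℂ => c₀ + c₁ * (s * w)) = fun _ => c₁ * s := by
    intro c₀ c₁
    funext z
    have : (fun w : ℂ => c₀ + c₁ * (s * w)) = fun w : ℂ => c₀ + (c₁ * s) * w := by
      funext w; ring
    rw [this]
    simpa using (((hasDerivAt_id z).const_mul (c₁ * s)).const_add c₀).deriv
  constructor
  · rintro ⟨c₀, c₁, hc₀, hc₁, heq⟩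
    have h0 := heq 0
    have h1 := heq 1
    rw [hderiv] at h0 h1
    simp only [deriv_const'] at h0 h1
    -- extract the two linear equations
    have e1 : p₀ * c₁ + q₀ * c₀ = 0 := by
      have h0' : s * (p₀ * c₁ + q₀ * c₀) = 0 := by linear_combination h0
      rcases mul_eq_zero.mp h0' with h | h
      · exact absurd h hs
      · exact h
    have e2 : (p₁ + q₀) * c₁ + 2 * c₀ = 0 := by
      have h1' : s ^ 2 * ((p₁ + q₀) * c₁ + 2 * c₀) = 0 := by linear_combination h1 - h0
      rcases mul_eq_zero.mp h1' with h | h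
      · exact absurd h (pow_ne_zero 2 hs)
      · exact h
    have key : c₁ * (q₀ ^ 2 + p₁ * q₀ - 2 * p₀) = 0 := by
      linear_combination q₀ * e2 - 2 * e1
    rcases mul_eq_zero.mp key with h | h
    · exact absurd h hc₁
    · exact h
  · intro h
    refine ⟨-(p₁ + q₀), 2, ?_, two_ne_zero, ?_⟩
    · intro hc
      apply hp₀
      have hq : p₁ + q₀ = 0 := neg_eq_zero.mp hc
      have h2 : (2 : ℂ) * p₀ = 0 := by linear_combination -h + q₀ * hq
      exact (mul_eq_zero.mp h2).resolve_left two_ne_zero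
    · intro z
      rw [hderiv]
      simp only [deriv_const']
      linear_combination (-s) * h
end

section
/- For N = 2 (q₁ = 4): if q₀ satisfies q₀³ + 3p₁q₀² + (2p₁² − 8p₀ − 4)q₀ − 8p₀p₁ = 0, then there exist c₀, c₁, c₂ ∈ ℂ, not all zero, such that Φ(z) = c₀ + c₁ sz + c₂ (sz)² solves z Φ'' + (p₀ + p₁ s z − 2 s² z²) Φ' + (q₀ s + 4 s² z) Φ = 0. -/
/-! Writing `x = s z` and `Φ = c₀ + c₁ x + c₂ x²`, the equation divided by `s` becomes a polynomial
identity in `x` whose cubic coefficient cancels because `q₁ = 4`. The coefficients of `x²` and `x`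
fix `c₁` and `c₀` from `c₂`, and the remaining constant coefficient is the cubic in `q₀`. -/

section QuadraticInScaledVariable

variable {𝕜 : Type*} [NontriviallyNormedField 𝕜] (c₀ c₁ c₂ s : 𝕜)

theorem deriv_quadratic_comp_mul :
    deriv (fun w => c₀ + c₁ * (s * w) + c₂ * (s * w) ^ 2)
      = fun z => s * (c₁ + 2 * c₂ * (s * z)) := by
  funext z
  have hsw : HasDerivAt (fun w => s * w) s z := by
    simpa using (hasDerivAt_id z).const_mul s
  exact ((((hsw.const_mul c₁).const_add c₀).fun_add ((hsw.fun_pow 2).const_mul c₂)).congr_deriv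
    (by push_cast; ring)).deriv

theorem deriv_deriv_quadratic_comp_mul :
    deriv (deriv (fun w => c₀ + c₁ * (s * w) + c₂ * (s * w) ^ 2)) = fun _ => 2 * c₂ * s ^ 2 := by
  rw [deriv_quadratic_comp_mul]
  funext z
  exact ((((((hasDerivAt_id' z).const_mul s).const_mul (2 * c₂)).const_add c₁).const_mul s
    ).congr_deriv (by ring)).deriv

theorem biconfluentHeun_quadratic_comp_mul (p₀ p₁ q₀ z : 𝕜) :
    z * deriv (deriv (fun w => c₀ + c₁ * (s * w) + c₂ * (s * w) ^ 2)) z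
        + (p₀ + p₁ * s * z - 2 * s ^ 2 * z ^ 2)
            * deriv (fun w => c₀ + c₁ * (s * w) + c₂ * (s * w) ^ 2) z
        + (q₀ * s + 4 * s ^ 2 * z) * (c₀ + c₁ * (s * z) + c₂ * (s * z) ^ 2)
      = s * (((2 * p₁ + q₀) * c₂ + 2 * c₁) * (s * z) ^ 2
          + (2 * (1 + p₀) * c₂ + (p₁ + q₀) * c₁ + 4 * c₀) * (s * z)
          + (p₀ * c₁ + q₀ * c₀)) := by
  rw [deriv_deriv_quadratic_comp_mul, deriv_quadratic_comp_mul]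
  ring

end QuadraticInScaledVariable

theorem bhe_degree_two_polynomial_general (p₀ p₁ q₀ s : ℂ)
    (hq₀ : q₀ ^ 3 + 3 * p₁ * q₀ ^ 2 + (2 * p₁ ^ 2 - 8 * p₀ - 4) * q₀ - 8 * p₀ * p₁ = 0) :
    ∃ c₀ c₁ c₂ : ℂ, ¬(c₀ = 0 ∧ c₁ = 0 ∧ c₂ = 0) ∧
      ∀ z : ℂ,
        z * deriv (deriv (fun w => c₀ + c₁ * (s * w) + c₂ * (s * w) ^ 2)) z
          + (p₀ + p₁ * s * z - 2 * s ^ 2 * z ^ 2)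
              * deriv (fun w => c₀ + c₁ * (s * w) + c₂ * (s * w) ^ 2) z
          + (q₀ * s + 4 * s ^ 2 * z) * (c₀ + c₁ * (s * z) + c₂ * (s * z) ^ 2) = 0 := by
  -- `c₂ = 8` clears the denominators of the back-substitution
  refine ⟨(p₁ + q₀) * (2 * p₁ + q₀) - 4 * (1 + p₀), -4 * (2 * p₁ + q₀), 8,
    fun ⟨_, _, h₈⟩ => by norm_num at h₈, fun z => ?_⟩
  rw [biconfluentHeun_quadratic_comp_mul]
  linear_combination s * hq₀

/-- for `N = 2` (`q₁ = 4`), if `q₀` satisfies the cubic eigenvalue equation,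
then a nontrivial quadratic polynomial solution of the biconfluent Heun equation exists. -/
theorem bhe_degree_two_polynomial (p₀ p₁ q₀ s : ℂ) (hs : s ≠ 0)
    (hq₀ : q₀ ^ 3 + 3 * p₁ * q₀ ^ 2 + (2 * p₁ ^ 2 - 8 * p₀ - 4) * q₀ - 8 * p₀ * p₁ = 0) :
    ∃ c₀ c₁ c₂ : ℂ, ¬(c₀ = 0 ∧ c₁ = 0 ∧ c₂ = 0) ∧
      ∀ z : ℂ,
        z * deriv (deriv (fun w => c₀ + c₁ * (s * w) + c₂ * (s * w) ^ 2)) z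
          + (p₀ + p₁ * s * z - 2 * s ^ 2 * z ^ 2)
              * deriv (fun w => c₀ + c₁ * (s * w) + c₂ * (s * w) ^ 2) z
          + (q₀ * s + 4 * s ^ 2 * z) * (c₀ + c₁ * (s * z) + c₂ * (s * z) ^ 2) = 0 :=
  bhe_degree_two_polynomial_general p₀ p₁ q₀ s hq₀
end

section
/- For b₀, b₁ ∈ ℂ with b₁ ≠ 0 and λ := α₁(1 + b₀/b₁) not a nonpositive integer: b₀·ₚF_q(α₁,…; γ; z) + b₁·ₚF_q(α₁+1, α₂,…; γ; z) = (b₀+b₁)·ₚ₊₁F_{q+1}(α₁,…,αₚ, λ+1; γ₁,…,γ_q, λ; z), as an identity of formal power series. -/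
noncomputable def ascp (x : ℂ) (k : ℕ) : ℂ := (ascPochhammer ℂ k).eval x

noncomputable def pFq (a b : List ℂ) : PowerSeries ℂ :=
  PowerSeries.mk fun k =>
    (a.map fun x => ascp x k).prod / ((b.map fun x => ascp x k).prod * (Nat.factorial k : ℂ))

/-!
Coefficientwise, `(α₁+1)_k = (α₁)_k (α₁+k)/α₁` and `(λ+1)_k/(λ)_k = (λ+k)/λ`, so after dividing
by `(α₁)_k` the identity becomes `b₀ + b₁ + b₁ k/α₁ = (b₀+b₁) + (b₀+b₁) k/λ`, which is exactly
the choice `λ b₁ = α₁ (b₀+b₁)`.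
-/

lemma ascp_ne_zero {x : ℂ} (h : ∀ m : ℕ, x ≠ -(m : ℂ)) (k : ℕ) : ascp x k ≠ 0 := by
  rw [ascp, Ne, ascPochhammer_eval_eq_zero_iff]
  rintro ⟨m, -, hm⟩
  exact h m (by linear_combination hm)

lemma mul_ascp_add_one (x : ℂ) (k : ℕ) : x * ascp (x + 1) k = ascp x k * (x + k) := by
  have := congrArg (Polynomial.eval x) ((ascPochhammer_succ_left (S := ℂ) k).symm.trans
    (ascPochhammer_succ_right (S := ℂ) k))
  simpa [ascp, Polynomial.eval_comp] using this

lemma ascp_add_one {x : ℂ} (hx : x ≠ 0) (k : ℕ) : ascp (x + 1) k = ascp x k * (x + k) / x := by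
  rw [← mul_ascp_add_one, mul_div_cancel_left₀ _ hx]

lemma ascp_two_term_combination {α l b₀ b₁ : ℂ} (hα : α ≠ 0) (hl : l ≠ 0)
    (hlb : l * b₁ = α * (b₀ + b₁)) (k : ℕ) (hk : ascp l k ≠ 0) :
    b₀ * ascp α k + b₁ * ascp (α + 1) k
      = (b₀ + b₁) * ascp α k * (ascp (l + 1) k / ascp l k) := by
  rw [ascp_add_one hα, ascp_add_one hl]
  field_simp
  linear_combination (k : ℂ) * ascp α k * hlb

lemma coeff_pFq_cons (x : ℂ) (a b : List ℂ) (k : ℕ) :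
    PowerSeries.coeff k (pFq (x :: a) b) = ascp x k * PowerSeries.coeff k (pFq a b) := by
  simp only [pFq, PowerSeries.coeff_mk, List.map_cons, List.prod_cons, mul_div_assoc]

lemma coeff_pFq_append_pair (a b : List ℂ) (x y : ℂ) (k : ℕ) :
    PowerSeries.coeff k (pFq (a ++ [x]) (b ++ [y]))
      = PowerSeries.coeff k (pFq a b) * (ascp x k / ascp y k) := by
  simp only [pFq, PowerSeries.coeff_mk, List.map_append, List.prod_append, List.map_singleton,
    List.prod_singleton]
  rw [mul_right_comm, div_mul_div_comm]

theorem pFq_two_term_combination_general (α₁ : ℂ) (αs γs : List ℂ) (b₀ b₁ : ℂ) (hb₁ : b₁ ≠ 0)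
    (l : ℂ) (hl : l = α₁ * (1 + b₀ / b₁)) (hl' : ∀ m : ℕ, l ≠ -(m : ℂ)) :
    PowerSeries.C b₀ * pFq (α₁ :: αs) γs + PowerSeries.C b₁ * pFq ((α₁ + 1) :: αs) γs
      = PowerSeries.C (b₀ + b₁) * pFq ((α₁ :: αs) ++ [l + 1]) (γs ++ [l]) := by
  have hl0 : l ≠ 0 := by simpa using hl' 0
  have hα : α₁ ≠ 0 := by
    rintro rfl
    exact hl0 (by simpa using hl)
  have hlb : l * b₁ = α₁ * (b₀ + b₁) := by
    rw [hl]
    field_simp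
    ring
  ext k
  simp only [(PowerSeries.coeff k).map_add, PowerSeries.coeff_C_mul, List.cons_append, coeff_pFq_cons,
    coeff_pFq_append_pair]
  linear_combination PowerSeries.coeff k (pFq αs γs) *
    ascp_two_term_combination hα hl0 hlb k (ascp_ne_zero hl' k)

/-- two-term contiguous combination as a single `ₚ₊₁F_{q+1}` with the
extra parameter pair `(λ+1; λ)`, `λ = α₁(1 + b₀/b₁)`. -/
theorem pFq_two_term_combination (α₁ : ℂ) (αs γs : List ℂ) (b₀ b₁ : ℂ) (hb₁ : b₁ ≠ 0)
    (hα : ∀ m : ℕ, α₁ ≠ -(m : ℂ)) (hγ : ∀ γ ∈ γs, ∀ m : ℕ, γ ≠ -(m : ℂ))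
    (l : ℂ) (hl : l = α₁ * (1 + b₀ / b₁)) (hl' : ∀ m : ℕ, l ≠ -(m : ℂ)) :
    PowerSeries.C b₀ * pFq (α₁ :: αs) γs + PowerSeries.C b₁ * pFq ((α₁ + 1) :: αs) γs
      = PowerSeries.C (b₀ + b₁) * pFq ((α₁ :: αs) ++ [l + 1]) (γs ++ [l]) :=
  pFq_two_term_combination_general α₁ αs γs b₀ b₁ hb₁ l hl hl'
end
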